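/- arXiv:1702.03232 — 2 statements merged into one kernel-verified Lean document; each statement's English description precedes it below -/
import Mathlib

section
/- Let Γ be a positive, decreasing, continuously differentiable function on [0,∞) with ∫₀^∞ t^d Γ(t) dt < ∞ and t^{d-1}Γ(t) → 0 as t → ∞, for some integer d ≥ 0. Write g(y) = -Γ'(y)/Γ(y) and G(y) = ∫_y^∞ t^d Γ(t) dt. If g(y) ≥ α y for all y > ȳ (where α > 0, ȳ ≥ 0), then for every ε > 0 and all y > max(ȳ, sqrt(|d-1| (1/(ε α²) + 1/α))), one has G(y) ≤ (1/α + ε) y^{d-1} Γ(y). -/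
open MeasureTheory Set Filter

/-! Beyond `ȳ` we have `-Γ' ≥ α t Γ`, so `α G(y) ≤ ∫_y^∞ t^(d-1) (-Γ')`. Integrating by parts, the
right-hand side is `y^(d-1) Γ(y) + (d-1) ∫_y^∞ t^(d-2) Γ`, and `t^(d-2) ≤ t^d / y²` bounds the last
integral by `G(y) / y²`. For `y² > |d-1| (1/(εα²) + 1/α)` this term is absorbed into the left-hand
side. -/

section TailIntegrals

variable {f Γ Γ' : ℝ → ℝ} {p c y : ℝ}

theorem integrableOn_Ioi_rpow_sub_two_mul (hy : 0 < y)
    (hf : IntegrableOn (fun t => t ^ p * f t) (Ioi y)) :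
    IntegrableOn (fun t => t ^ (p - 2) * f t) (Ioi y) := by
  have hbound : ∀ᵐ t ∂(volume.restrict (Ioi y)), ‖t ^ (-2 : ℝ)‖ ≤ y ^ (-2 : ℝ) := by
    refine (ae_restrict_iff' measurableSet_Ioi).mpr (ae_of_all _ fun t ht => ?_)
    rw [Real.norm_of_nonneg (Real.rpow_nonneg (hy.trans ht).le _)]
    exact Real.rpow_le_rpow_of_nonpos hy (le_of_lt ht) (by norm_num)
  have hprod : IntegrableOn (fun t => t ^ (-2 : ℝ) * (t ^ p * f t)) (Ioi y) :=
    hf.bdd_mul (by fun_prop) hbound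
  refine hprod.congr_fun (fun t ht => ?_) measurableSet_Ioi
  dsimp only
  rw [← mul_assoc, ← Real.rpow_add (hy.trans ht), neg_add_eq_sub]

theorem setIntegral_Ioi_rpow_sub_two_mul_le (hy : 0 < y)
    (hf : IntegrableOn (fun t => t ^ p * f t) (Ioi y)) (hf₀ : ∀ t ∈ Ioi y, 0 ≤ f t) :
    ∫ t in Ioi y, t ^ (p - 2) * f t ≤ (∫ t in Ioi y, t ^ p * f t) / y ^ 2 := by
  rw [← integral_div]
  refine setIntegral_mono_on (integrableOn_Ioi_rpow_sub_two_mul hy hf) (hf.div_const _)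
    measurableSet_Ioi fun t ht => ?_
  have ht₀ : 0 < t := hy.trans ht
  have hpow : t ^ (p - 2) ≤ t ^ p / y ^ 2 := by
    rw [Real.rpow_sub ht₀, Real.rpow_two]
    gcongr
    exact le_of_lt ht
  calc t ^ (p - 2) * f t ≤ t ^ p / y ^ 2 * f t := mul_le_mul_of_nonneg_right hpow (hf₀ t ht)
    _ = t ^ p * f t / y ^ 2 := by ring

theorem integrableOn_Ioi_rpow_mul_neg_deriv_and_integral_eq (hy : 0 < y)
    (hderiv : ∀ t ∈ Ici y, HasDerivAt Γ (Γ' t) t) (hΓ' : ∀ t ∈ Ioi y, Γ' t ≤ 0)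
    (hint : IntegrableOn (fun t => t ^ (c - 1) * Γ t) (Ioi y))
    (hlim : Tendsto (fun t => t ^ c * Γ t) atTop (nhds 0)) :
    IntegrableOn (fun t => t ^ c * -Γ' t) (Ioi y) ∧
      ∫ t in Ioi y, t ^ c * -Γ' t = y ^ c * Γ y + c * ∫ t in Ioi y, t ^ (c - 1) * Γ t := by
  set f₂ : ℝ → ℝ := fun t => t ^ (c - 1) * Γ t
  set P : ℝ → ℝ := fun t => ∫ s in y..t, f₂ s
  have hf₂ : ContinuousOn f₂ (Ioi y) := fun t ht =>
    ((Real.continuousAt_rpow_const _ _ (Or.inl (hy.trans ht).ne')).mul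
      (hderiv t (mem_Ici_of_Ioi ht)).continuousAt).continuousWithinAt
  have hf₂_interval : ∀ t ∈ Ici y, IntervalIntegrable f₂ volume y t := fun t ht =>
    (intervalIntegrable_iff_integrableOn_Ioc_of_le ht).mpr (hint.mono_set Ioc_subset_Ioi_self)
  have hP : ∀ t ∈ Ioi y, HasDerivAt P (f₂ t) t := fun t ht =>
    intervalIntegral.integral_hasDerivAt_right (hf₂_interval t (mem_Ici_of_Ioi ht))
      (hf₂.stronglyMeasurableAtFilter isOpen_Ioi t ht) (hf₂.continuousAt (isOpen_Ioi.mem_nhds ht))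
  have hPy : ContinuousWithinAt P (Ici y) y := by
    have hIcc : ContinuousWithinAt P (Icc y (y + 1)) y := by
      refine intervalIntegral.continuousWithinAt_primitive Real.volume_singleton ?_
      simpa using hf₂_interval (y + 1) (by simp)
    exact hIcc.mono_of_mem_nhdsWithin (Icc_mem_nhdsGE (lt_add_one y))
  -- `H` is an antiderivative of the nonnegative `t ^ c * -Γ' t`, so the improper fundamental
  -- theorem of calculus for nonnegative derivatives also yields integrability.
  set H : ℝ → ℝ := fun t => -(t ^ c * Γ t) + c * P t
  have hH_deriv : ∀ t ∈ Ioi y, HasDerivAt H (t ^ c * -Γ' t) t := by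
    intro t ht
    have hF := (Real.hasDerivAt_rpow_const (p := c) (Or.inl (hy.trans ht).ne')).mul
      (hderiv t (mem_Ici_of_Ioi ht))
    exact (hF.neg.add ((hP t ht).const_mul c)).congr_deriv (by simp only [f₂]; ring)
  have hH_cont : ContinuousWithinAt H (Ici y) y :=
    (((Real.continuousAt_rpow_const _ _ (Or.inl hy.ne')).mul
      (hderiv y self_mem_Ici).continuousAt).continuousWithinAt.neg).add (hPy.const_mul c)
  have hw_nonneg : ∀ t ∈ Ioi y, 0 ≤ t ^ c * -Γ' t := fun t ht =>
    mul_nonneg (Real.rpow_nonneg (hy.trans ht).le _) (neg_nonneg.mpr (hΓ' t ht))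
  have hH_lim : Tendsto H atTop (nhds (-0 + c * ∫ t in Ioi y, f₂ t)) :=
    hlim.neg.add ((intervalIntegral_tendsto_integral_Ioi y hint tendsto_id).const_mul c)
  refine ⟨integrableOn_Ioi_deriv_of_nonneg hH_cont hH_deriv hw_nonneg hH_lim, ?_⟩
  rw [integral_Ioi_of_hasDerivAt_of_nonneg hH_cont hH_deriv hw_nonneg hH_lim]
  simp only [H, P, intervalIntegral.integral_same]
  ring

theorem mul_setIntegral_Ioi_rpow_mul_le {α : ℝ} (hy : 0 < y) (hα : 0 ≤ α)
    (hΓ : ∀ t ∈ Ioi y, 0 ≤ Γ t) (hderiv : ∀ t ∈ Ici y, HasDerivAt Γ (Γ' t) t)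
    (hg : ∀ t ∈ Ioi y, α * t * Γ t ≤ -Γ' t)
    (hint : IntegrableOn (fun t => t ^ p * Γ t) (Ioi y))
    (hlim : Tendsto (fun t => t ^ (p - 1) * Γ t) atTop (nhds 0)) :
    α * ∫ t in Ioi y, t ^ p * Γ t ≤
      y ^ (p - 1) * Γ y + |p - 1| * (∫ t in Ioi y, t ^ p * Γ t) / y ^ 2 := by
  have hexp : p - 1 - 1 = p - 2 := by ring
  have hint₂ : IntegrableOn (fun t => t ^ (p - 1 - 1) * Γ t) (Ioi y) := by
    simpa only [hexp] using integrableOn_Ioi_rpow_sub_two_mul hy hint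
  have hΓ' : ∀ t ∈ Ioi y, Γ' t ≤ 0 := fun t ht =>
    neg_nonneg.mp <| (mul_nonneg (mul_nonneg hα (hy.trans ht).le) (hΓ t ht)).trans (hg t ht)
  obtain ⟨hw, hw_eq⟩ :=
    integrableOn_Ioi_rpow_mul_neg_deriv_and_integral_eq hy hderiv hΓ' hint₂ hlim
  have hpointwise : ∀ t ∈ Ioi y, α * (t ^ p * Γ t) ≤ t ^ (p - 1) * -Γ' t := fun t ht => by
    have ht₀ : 0 < t := hy.trans ht
    calc α * (t ^ p * Γ t) = t ^ (p - 1) * (α * t * Γ t) := by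
          rw [Real.rpow_sub_one ht₀.ne']; field_simp
      _ ≤ t ^ (p - 1) * -Γ' t := by gcongr; exact hg t ht
  have hI₂ := setIntegral_Ioi_rpow_sub_two_mul_le hy hint hΓ
  rw [← hexp] at hI₂
  calc α * ∫ t in Ioi y, t ^ p * Γ t = ∫ t in Ioi y, α * (t ^ p * Γ t) :=
        (integral_const_mul _ _).symm
    _ ≤ ∫ t in Ioi y, t ^ (p - 1) * -Γ' t :=
        setIntegral_mono_on (hint.const_mul α) hw measurableSet_Ioi hpointwise
    _ = y ^ (p - 1) * Γ y + (p - 1) * ∫ t in Ioi y, t ^ (p - 1 - 1) * Γ t := hw_eq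
    _ ≤ y ^ (p - 1) * Γ y + |p - 1| * ∫ t in Ioi y, t ^ (p - 1 - 1) * Γ t := by
        gcongr
        · exact setIntegral_nonneg measurableSet_Ioi fun t ht =>
            mul_nonneg (Real.rpow_nonneg (hy.trans ht).le _) (hΓ t ht)
        · exact le_abs_self _
    _ ≤ y ^ (p - 1) * Γ y + |p - 1| * (∫ t in Ioi y, t ^ p * Γ t) / y ^ 2 := by
        rw [mul_div_assoc]; gcongr

end TailIntegrals

theorem le_inv_add_mul_of_mul_le_add_div_sq {α ε k y I Q : ℝ} (hα : 0 < α) (hε : 0 < ε)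
    (hk : 0 ≤ k) (hQ : 0 ≤ Q) (hy : k * (1 / (ε * α ^ 2) + 1 / α) < y ^ 2)
    (h : α * I ≤ Q + k * I / y ^ 2) : I ≤ (1 / α + ε) * Q := by
  have hy₀ : 0 < y ^ 2 := (by positivity : 0 ≤ k * (1 / (ε * α ^ 2) + 1 / α)).trans_lt hy
  have hk' : k * (1 + ε * α) < ε * α ^ 2 * y ^ 2 :=
    calc k * (1 + ε * α) = ε * α ^ 2 * (k * (1 / (ε * α ^ 2) + 1 / α)) := by
          field_simp [hα.ne', hε.ne']
      _ < ε * α ^ 2 * y ^ 2 := by gcongr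
  have h₁ : α * I * y ^ 2 ≤ Q * y ^ 2 + k * I := by
    have := mul_le_mul_of_nonneg_right h hy₀.le
    rwa [add_mul, div_mul_cancel₀ _ hy₀.ne'] at this
  have hεα : 0 ≤ 1 + ε * α := by positivity
  have h₂ : α * I ≤ (1 + ε * α) * Q := by
    rcases le_or_gt I 0 with hI | hI
    · nlinarith [mul_nonneg hεα hQ]
    · refine le_of_mul_le_mul_right ?_ hy₀
      nlinarith [mul_le_mul_of_nonneg_left h₁ hεα, mul_lt_mul_of_pos_right hk' hI]
  rw [show (1 / α + ε) * Q = (1 + ε * α) * Q / α by field_simp, le_div_iff₀ hα]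
  linarith

theorem stmt0_general (d : ℕ) (Γ Γ' : ℝ → ℝ)
    (hpos : ∀ t : ℝ, 0 ≤ t → 0 < Γ t)
    (hderiv : ∀ t : ℝ, 0 ≤ t → HasDerivAt Γ (Γ' t) t)
    (hint : IntegrableOn (fun t => t ^ (d : ℝ) * Γ t) (Ioi 0))
    (hlim : Tendsto (fun t => t ^ ((d : ℝ) - 1) * Γ t) atTop (nhds 0))
    (α ybar : ℝ) (hα : 0 < α)
    (hg : ∀ y : ℝ, ybar < y → α * y ≤ -Γ' y / Γ y) :
    ∀ ε : ℝ, 0 < ε → ∀ y : ℝ,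
      max ybar (Real.sqrt (|(d : ℝ) - 1| * (1 / (ε * α ^ 2) + 1 / α))) < y →
      (∫ t in Ioi y, t ^ (d : ℝ) * Γ t) ≤ (1 / α + ε) * y ^ ((d : ℝ) - 1) * Γ y := by
  intro ε hε y hy
  have hy_sqrt := (le_max_right _ _).trans_lt hy
  have hy₀ : 0 < y := (Real.sqrt_nonneg _).trans_lt hy_sqrt
  have hybar : ∀ t ∈ Ioi y, ybar < t := fun t ht => ((le_max_left _ _).trans_lt hy).trans ht
  have htail := mul_setIntegral_Ioi_rpow_mul_le hy₀ hα.le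
    (fun t ht => (hpos t (hy₀.trans ht).le).le) (fun t ht => hderiv t (hy₀.le.trans ht))
    (fun t ht => (le_div_iff₀ (hpos t (hy₀.trans ht).le)).mp (hg t (hybar t ht)))
    (hint.mono_set (Ioi_subset_Ioi hy₀.le)) hlim
  rw [mul_assoc]
  exact le_inv_add_mul_of_mul_le_add_div_sq hα hε (abs_nonneg _)
    (mul_pos (Real.rpow_pos_of_pos hy₀ _) (hpos y hy₀.le)).le
    ((Real.sqrt_lt' hy₀).mp hy_sqrt) htail

/-- Gaussian-type estimate, upper bound version (Lemma A.1(i)). -/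
theorem stmt0 (d : ℕ) (Γ Γ' : ℝ → ℝ)
    (hpos : ∀ t : ℝ, 0 ≤ t → 0 < Γ t)
    (hanti : AntitoneOn Γ (Ici 0))
    (hderiv : ∀ t : ℝ, 0 ≤ t → HasDerivAt Γ (Γ' t) t)
    (hcont : ContinuousOn Γ' (Ici 0))
    (hint : IntegrableOn (fun t => t ^ (d : ℝ) * Γ t) (Ioi 0))
    (hlim : Tendsto (fun t => t ^ ((d : ℝ) - 1) * Γ t) atTop (nhds 0))
    (α ybar : ℝ) (hα : 0 < α) (hybar : 0 ≤ ybar)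
    (hg : ∀ y : ℝ, ybar < y → α * y ≤ -Γ' y / Γ y) :
    ∀ ε : ℝ, 0 < ε → ∀ y : ℝ,
      max ybar (Real.sqrt (|(d : ℝ) - 1| * (1 / (ε * α ^ 2) + 1 / α))) < y →
      (∫ t in Ioi y, t ^ (d : ℝ) * Γ t) ≤ (1 / α + ε) * y ^ ((d : ℝ) - 1) * Γ y :=
  stmt0_general d Γ Γ' hpos hderiv hint hlim α ybar hα hg
end

section
/- Let Γ be a positive, decreasing, continuously differentiable function on [0,∞) with ∫₀^∞ t^d Γ(t) dt < ∞ and t^{d-1}Γ(t) → 0 as t → ∞, for some integer d ≥ 0. Write g(y) = -Γ'(y)/Γ(y) and G(y) = ∫_y^∞ t^d Γ(t) dt. If g(y) ≤ α y for all y > ȳ (where α > 0, ȳ ≥ 0), then for every ε > 0 and all y > max(ȳ, sqrt(|d-1| (1/(ε α²) - 1/α))), one has G(y) ≥ (1/α - ε) y^{d-1} Γ(y). -/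
/-!
`F x = x ^ (d - 1) * Γ x + K * ∫ t in y..x, t ^ d * Γ t` with `K = α + |d - 1| / y ^ 2` is
nondecreasing on `[y, ∞)`: the bound `-Γ' ≤ α t Γ` controls the `Γ'` term of `F'` and `x ≥ y`
controls the `(d - 1) x ^ (d - 2) Γ` term. Comparing `F y` with `lim F = K G(y)` gives
`y ^ (d - 1) Γ y ≤ K G(y)`, and the lower bound on `y` is exactly what makes `(1/α - ε) K ≤ 1`.
-/

open MeasureTheory Set Filter Topology

lemma le_of_hasDerivAt_nonneg_of_tendsto {f f' : ℝ → ℝ} {a L : ℝ}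
    (hf : ∀ x ∈ Ici a, HasDerivAt f (f' x) x) (hf' : ∀ x ∈ Ioi a, 0 ≤ f' x)
    (hL : Tendsto f atTop (𝓝 L)) : f a ≤ L := by
  have hmono : MonotoneOn f (Ici a) :=
    monotoneOn_of_hasDerivWithinAt_nonneg (convex_Ici a)
      (fun x hx => (hf x hx).continuousAt.continuousWithinAt)
      (fun x hx => (hf x (interior_subset hx)).hasDerivWithinAt)
      (by simpa only [interior_Ici] using hf')
  exact ge_of_tendsto hL ((eventually_ge_atTop a).mono fun x hx => hmono self_mem_Ici hx hx)

lemma rpow_mul_le_mul_integral_Ioi (d : ℝ) {Γ Γ' : ℝ → ℝ} {α y : ℝ} (hy : 0 < y)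
    (hΓ : ∀ t ∈ Ici y, 0 ≤ Γ t) (hΓ' : ∀ t ∈ Ioi 0, HasDerivAt Γ (Γ' t) t)
    (hdecay : ∀ t ∈ Ici y, -Γ' t ≤ α * t * Γ t)
    (hint : IntegrableOn (fun t => t ^ d * Γ t) (Ioi y))
    (hlim : Tendsto (fun t => t ^ (d - 1) * Γ t) atTop (𝓝 0)) :
    y ^ (d - 1) * Γ y ≤ (α + |d - 1| / y ^ 2) * ∫ t in Ioi y, t ^ d * Γ t := by
  set K := α + |d - 1| / y ^ 2
  have hcont : ContinuousOn (fun t => t ^ d * Γ t) (Ioi 0) := fun t ht =>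
    ((Real.continuousAt_rpow_const t d (Or.inl (ne_of_gt ht))).mul
      (hΓ' t ht).continuousAt).continuousWithinAt
  have hF : ∀ x ∈ Ici y, HasDerivAt (fun x => x ^ (d - 1) * Γ x + K * ∫ t in y..x, t ^ d * Γ t)
      ((d - 1) * x ^ (d - 1 - 1) * Γ x + x ^ (d - 1) * Γ' x + K * (x ^ d * Γ x)) x := by
    intro x hx
    have hx0 : 0 < x := hy.trans_le hx
    refine ((Real.hasDerivAt_rpow_const (Or.inl hx0.ne')).mul (hΓ' x hx0)).add
      ((intervalIntegral.integral_hasDerivAt_right ?_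
        (hcont.stronglyMeasurableAtFilter isOpen_Ioi x hx0)
        (hcont.continuousAt (Ioi_mem_nhds hx0))).const_mul K)
    exact (hcont.mono fun t ht => hy.trans_le (uIcc_of_le (mem_Ici.1 hx) ▸ ht).1).intervalIntegrable
  have hF' : ∀ x ∈ Ioi y,
      0 ≤ (d - 1) * x ^ (d - 1 - 1) * Γ x + x ^ (d - 1) * Γ' x + K * (x ^ d * Γ x) := by
    intro x hx
    have hx0 : 0 < x := hy.trans hx
    have hp : 0 < x ^ (d - 2) := Real.rpow_pos_of_pos hx0 _
    have e1 : x ^ (d - 1) = x ^ (d - 2) * x := by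
      rw [← Real.rpow_add_one hx0.ne']; ring_nf
    have e2 : x ^ d = x ^ (d - 2) * x ^ 2 := by
      rw [← Real.rpow_natCast, ← Real.rpow_add hx0]; ring_nf
    have hΓx := hΓ x (mem_Ici.2 hx.le)
    have h1 : -(|d - 1| * Γ x) ≤ (d - 1) * Γ x := by
      nlinarith [neg_abs_le (d - 1)]
    have h2 : |d - 1| * Γ x ≤ |d - 1| / y ^ 2 * x ^ 2 * Γ x := by
      have hxy : 1 ≤ x ^ 2 / y ^ 2 :=
        (one_le_div (by positivity)).2 (pow_le_pow_left₀ hy.le hx.le 2)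
      calc |d - 1| * Γ x = |d - 1| * 1 * Γ x := by ring
        _ ≤ |d - 1| * (x ^ 2 / y ^ 2) * Γ x := by gcongr
        _ = |d - 1| / y ^ 2 * x ^ 2 * Γ x := by ring
    have h3 := hdecay x (mem_Ici.2 hx.le)
    rw [show d - 1 - 1 = d - 2 by ring, e1, e2]
    have hbracket : 0 ≤ (d - 1) * Γ x + x * Γ' x + K * x ^ 2 * Γ x := by
      nlinarith
    calc (0 : ℝ) ≤ x ^ (d - 2) * ((d - 1) * Γ x + x * Γ' x + K * x ^ 2 * Γ x) :=
          mul_nonneg hp.le hbracket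
      _ = _ := by ring
  have hlimF : Tendsto (fun x => x ^ (d - 1) * Γ x + K * ∫ t in y..x, t ^ d * Γ t) atTop
      (𝓝 (0 + K * ∫ t in Ioi y, t ^ d * Γ t)) :=
    hlim.add ((intervalIntegral_tendsto_integral_Ioi y hint tendsto_id).const_mul K)
  simpa using le_of_hasDerivAt_nonneg_of_tendsto hF hF' hlimF

lemma one_div_sub_mul_add_div_le_one {α ε c s : ℝ} (hε : 0 < ε) (hs : 0 < s)
    (hαε : 0 < 1 / α - ε) (h : c * (1 / (ε * α ^ 2) - 1 / α) < s) :
    (1 / α - ε) * (α + c / s) ≤ 1 := by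
  have hα : 0 < α := one_div_pos.mp (by linarith)
  have key : c * (1 - ε * α) ≤ ε * α ^ 2 * s := by
    have e : c * (1 / (ε * α ^ 2) - 1 / α) * (ε * α ^ 2) = c * (1 - ε * α) := by field_simp
    nlinarith [mul_lt_mul_of_pos_right h (by positivity : (0:ℝ) < ε * α ^ 2)]
  have e : 1 - (1 / α - ε) * (α + c / s) = (ε * α ^ 2 * s - c * (1 - ε * α)) / (α * s) := by
    field_simp; ring
  rw [← sub_nonneg, e]
  exact div_nonneg (by linarith) (by positivity)

theorem stmt1_general (d : ℕ) (Γ Γ' : ℝ → ℝ)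
    (hpos : ∀ t : ℝ, 0 ≤ t → 0 < Γ t)
    (hderiv : ∀ t : ℝ, 0 ≤ t → HasDerivAt Γ (Γ' t) t)
    (hint : IntegrableOn (fun t => t ^ (d : ℝ) * Γ t) (Ioi 0))
    (hlim : Tendsto (fun t => t ^ ((d : ℝ) - 1) * Γ t) atTop (nhds 0))
    (α ybar : ℝ)
    (hg : ∀ y : ℝ, ybar < y → -Γ' y / Γ y ≤ α * y) :
    ∀ ε : ℝ, 0 < ε → ∀ y : ℝ,
      max ybar (Real.sqrt (|(d : ℝ) - 1| * (1 / (ε * α ^ 2) - 1 / α))) < y →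
      (1 / α - ε) * y ^ ((d : ℝ) - 1) * Γ y ≤ ∫ t in Ioi y, t ^ (d : ℝ) * Γ t := by
  intro ε hε y hy
  rw [max_lt_iff] at hy
  have hy0 : 0 < y := (Real.sqrt_nonneg _).trans_lt hy.2
  have hdecay : ∀ t ∈ Ici y, -Γ' t ≤ α * t * Γ t := fun t ht =>
    (div_le_iff₀ (hpos t (hy0.le.trans ht))).1 (hg t (hy.1.trans_le ht))
  have htail := rpow_mul_le_mul_integral_Ioi d hy0 (fun t ht => (hpos t (hy0.le.trans ht)).le)
    (fun t ht => hderiv t (le_of_lt ht)) hdecay (hint.mono_set (Ioi_subset_Ioi hy0.le)) hlim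
  have hG : 0 ≤ ∫ t in Ioi y, t ^ (d : ℝ) * Γ t := setIntegral_nonneg measurableSet_Ioi
    fun t ht => mul_nonneg (Real.rpow_nonneg (hy0.trans ht).le _) (hpos t (hy0.trans ht).le).le
  rcases le_or_gt (1 / α - ε) 0 with hc | hc
  · exact (mul_nonpos_of_nonpos_of_nonneg (mul_nonpos_of_nonpos_of_nonneg hc
      (Real.rpow_nonneg hy0.le _)) (hpos y hy0.le).le).trans hG
  · have hK := one_div_sub_mul_add_div_le_one hε (pow_pos hy0 2) hc
      ((Real.sqrt_lt' hy0).1 hy.2)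
    calc (1 / α - ε) * y ^ ((d : ℝ) - 1) * Γ y
        ≤ (1 / α - ε) * ((α + |(d : ℝ) - 1| / y ^ 2) * ∫ t in Ioi y, t ^ (d : ℝ) * Γ t) := by
          rw [mul_assoc]; exact mul_le_mul_of_nonneg_left htail hc.le
      _ ≤ ∫ t in Ioi y, t ^ (d : ℝ) * Γ t := by
          rw [← mul_assoc]; exact mul_le_of_le_one_left hG hK

/-- Gaussian-type estimate, lower bound version (Lemma A.1(ii)). -/
theorem stmt1 (d : ℕ) (Γ Γ' : ℝ → ℝ)
    (hpos : ∀ t : ℝ, 0 ≤ t → 0 < Γ t)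
    (hanti : AntitoneOn Γ (Ici 0))
    (hderiv : ∀ t : ℝ, 0 ≤ t → HasDerivAt Γ (Γ' t) t)
    (hcont : ContinuousOn Γ' (Ici 0))
    (hint : IntegrableOn (fun t => t ^ (d : ℝ) * Γ t) (Ioi 0))
    (hlim : Tendsto (fun t => t ^ ((d : ℝ) - 1) * Γ t) atTop (nhds 0))
    (α ybar : ℝ) (hα : 0 < α) (hybar : 0 ≤ ybar)
    (hg : ∀ y : ℝ, ybar < y → -Γ' y / Γ y ≤ α * y) :
    ∀ ε : ℝ, 0 < ε → ∀ y : ℝ,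
      max ybar (Real.sqrt (|(d : ℝ) - 1| * (1 / (ε * α ^ 2) - 1 / α))) < y →
      (1 / α - ε) * y ^ ((d : ℝ) - 1) * Γ y ≤ ∫ t in Ioi y, t ^ (d : ℝ) * Γ t :=
  stmt1_general d Γ Γ' hpos hderiv hint hlim α ybar hg
end
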